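/- arXiv:1601.04782 — 7 statements merged into one kernel-verified Lean document; each statement's English description precedes it below -/
import Mathlib

section
/- Let p be an odd prime and let a be a positive integer. For every k with 1 ≤ k ≤ (p^a-1)/2, the p-adic valuation of the binomial coefficient binom(p^a - k, (p^a-1)/2 - k) is at most a - 1. -/
/-- For an odd prime `p`, a positive integer `a`, and `1 ≤ k ≤ (p^a-1)/2`,
the `p`-adic valuation of `C(p^a - k, (p^a-1)/2 - k)` is at most `a - 1`. -/
theorem padicValNat_choose_le (p : ℕ) (hp : p.Prime) (hodd : p ≠ 2)
    (a : ℕ) (ha : 1 ≤ a) (k : ℕ) (hk1 : 1 ≤ k) (hk2 : k ≤ (p ^ a - 1) / 2) :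
    padicValNat p ((p ^ a - k).choose ((p ^ a - 1) / 2 - k)) ≤ a - 1 := by
  haveI : Fact p.Prime := ⟨hp⟩
  have hp1 : 1 < p := hp.one_lt
  have hpa : 1 < p ^ a := Nat.one_lt_pow (by omega) hp1
  have hhalf : (p ^ a - 1) / 2 ≤ p ^ a - 1 := Nat.div_le_self _ _
  have hkle : (p ^ a - 1) / 2 - k ≤ p ^ a - k := by omega
  have hlog : Nat.log p (p ^ a - k) < a := by
    exact Nat.log_lt_of_lt_pow (by omega) (by omega)
  rw [padicValNat_choose hkle hlog]
  calc ((Finset.Ico 1 a).filter fun i =>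
        p ^ i ≤ ((p ^ a - 1) / 2 - k) % p ^ i + (p ^ a - k - ((p ^ a - 1) / 2 - k)) % p ^ i).card
      ≤ (Finset.Ico 1 a).card := Finset.card_filter_le _ _
    _ = a - 1 := by simp
end

section
/- For every positive integer n, ∑_{k=0}^{n-1} 1/binom(n-1,k)² = (2n²/(n+1)) · ∑_{k=1}^{n} 1/(k·binom(2n+1-k, n-k)), as an identity of rational numbers. -/
/-!
Write `S m = ∑ₖ C(m,k)⁻²` and `B n = ∑_{k=1}^n 1/(k C(2n+1-k, n-k))`. Creative telescoping
(Zeilberger's algorithm) gives a first-order recurrence for each: an explicit certificate `G`, a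
rational function of `k` times the summand, turns the summand combination of the recurrence into
`G (k + 1) - G k`, a rational-function identity once all binomial coefficients are expressed
through a single one. The two recurrences are compatible with `(m + 2) S m = 2 (m + 1)² B (m + 1)`,
which then follows by induction from `m = 0`.
-/

open Finset

namespace Nat

variable {K : Type*} [Field K] [CharZero K]

theorem cast_choose_succ_left_eq_div {n k r : ℕ} (h : n = k + r) :
    ((n + 1).choose k : K) = n.choose k * (n + 1) / (r + 1) := by
  have hr : n + 1 - k = r + 1 := by omega
  have := choose_mul_succ_eq n k
  rw [hr] at this
  rw [eq_div_iff (Nat.cast_add_one_ne_zero _)]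
  exact_mod_cast this.symm

theorem cast_choose_succ_right_eq_div {n k r : ℕ} (h : n = k + r) :
    (n.choose (k + 1) : K) = n.choose k * r / (k + 1) := by
  have hr : n - k = r := by omega
  have := choose_succ_right_eq n k
  rw [hr] at this
  rw [eq_div_iff (Nat.cast_add_one_ne_zero _)]
  exact_mod_cast this

end Nat

def invChooseSqSum (m : ℕ) : ℚ := ∑ k ∈ range (m + 1), 1 / (m.choose k : ℚ) ^ 2

def invChooseSqCert (m j : ℕ) : ℚ :=
  (2 * (j : ℚ) ^ 3 - (7 * m + 10) * j ^ 2 + 2 * (m + 1) * (4 * m + 7) * j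
    - 3 * (m + 2) * (m + 1) ^ 2) / (m.choose j : ℚ) ^ 2

theorem invChooseSq_telescoping {m k : ℕ} (hk : k < m) :
    2 * ((m : ℚ) + 1) ^ 2 * (2 * m + 5) * (1 / ((m + 1).choose k : ℚ) ^ 2)
      - ((m : ℚ) + 2) ^ 3 * (1 / (m.choose k : ℚ) ^ 2)
      = invChooseSqCert m (k + 1) - invChooseSqCert m k := by
  obtain ⟨r, rfl⟩ := Nat.exists_eq_add_of_lt hk
  have hc : ((k + r + 1).choose k : ℚ) ≠ 0 := by exact_mod_cast (Nat.choose_pos (by omega)).ne'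
  rw [invChooseSqCert, invChooseSqCert, Nat.cast_choose_succ_left_eq_div (r := r + 1) (by omega),
    Nat.cast_choose_succ_right_eq_div (r := r + 1) (by omega)]
  push_cast
  field_simp
  ring

theorem invChooseSqSum_succ (m : ℕ) :
    2 * ((m : ℚ) + 1) ^ 2 * (2 * m + 5) * invChooseSqSum (m + 1)
      = ((m : ℚ) + 2) ^ 3 * invChooseSqSum m + 6 * ((m : ℚ) + 1) ^ 2 * (m + 2) := by
  have htele := sum_range_sub (invChooseSqCert m) m
  rw [← sum_congr rfl fun k hk ↦ invChooseSq_telescoping (mem_range.mp hk), sum_sub_distrib,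
    ← mul_sum, ← mul_sum] at htele
  simp only [invChooseSqCert, Nat.choose_self, Nat.choose_zero_right] at htele
  rw [invChooseSqSum, invChooseSqSum, sum_range_succ, sum_range_succ, sum_range_succ,
    Nat.choose_succ_self_right, Nat.choose_self, Nat.choose_self]
  push_cast at htele ⊢
  field_simp at htele ⊢
  linear_combination htele

def invMulChooseTerm (n k : ℕ) : ℚ := 1 / (k * (2 * n + 1 - k).choose (n - k))

def invMulChooseSum (n : ℕ) : ℚ := ∑ k ∈ Icc 1 n, invMulChooseTerm n k

def invMulChooseCert (n i : ℕ) : ℚ :=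
  -(((i : ℚ) - 1) * (n + 1 - i)) / ((n + 3) * (2 * n + 3 - i).choose (n - i))

theorem invMulChoose_telescoping {n k : ℕ} (hk : 1 ≤ k) (hkn : k < n) :
    2 * ((n : ℚ) + 1) * (2 * n + 3) * invMulChooseTerm (n + 1) k
      - ((n : ℚ) + 1) * (n + 2) * invMulChooseTerm n k
      = invMulChooseCert n (k + 1) - invMulChooseCert n k := by
  obtain ⟨j, rfl⟩ := Nat.exists_eq_add_of_lt hkn
  have e1 : 2 * (k + j + 1 + 1) + 1 - k = k + 2 * j + 3 + 1 + 1 := by omega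
  have e2 : k + j + 1 + 1 - k = j + 1 + 1 := by omega
  have e3 : 2 * (k + j + 1) + 1 - k = k + 2 * j + 3 := by omega
  have e4 : k + j + 1 - k = j + 1 := by omega
  have e5 : 2 * (k + j + 1) + 3 - (k + 1) = k + 2 * j + 3 + 1 := by omega
  have e6 : k + j + 1 - (k + 1) = j := by omega
  have e7 : 2 * (k + j + 1) + 3 - k = k + 2 * j + 3 + 1 + 1 := by omega
  simp only [invMulChooseTerm, invMulChooseCert, e1, e2, e3, e4, e5, e6, e7]
  -- every binomial coefficient is reduced to `C(k+2j+3, j) = C(2n+1-k, n-1-k)`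
  rw [Nat.cast_choose_succ_right_eq_div (n := k + 2 * j + 3 + 1 + 1) (k := j + 1) (r := k + j + 4)
      (by omega),
    Nat.cast_choose_succ_left_eq_div (n := k + 2 * j + 3 + 1) (k := j + 1) (r := k + j + 3)
      (by omega),
    Nat.cast_choose_succ_left_eq_div (n := k + 2 * j + 3) (k := j + 1) (r := k + j + 2) (by omega),
    Nat.cast_choose_succ_right_eq_div (n := k + 2 * j + 3) (k := j) (r := k + j + 3) (by omega),
    Nat.cast_choose_succ_left_eq_div (n := k + 2 * j + 3) (k := j) (r := k + j + 3) (by omega)]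
  have hc : ((k + 2 * j + 3).choose j : ℚ) ≠ 0 := by
    exact_mod_cast (Nat.choose_pos (by omega)).ne'
  have hk0 : (k : ℚ) ≠ 0 := by exact_mod_cast Nat.one_le_iff_ne_zero.mp hk
  push_cast
  field_simp
  ring

theorem invMulChooseTerm_self (n : ℕ) : invMulChooseTerm n n = 1 / n := by
  simp [invMulChooseTerm, show 2 * n + 1 - n = n + 1 by omega]

theorem invMulChooseTerm_succ_self (n : ℕ) : invMulChooseTerm (n + 1) n = 1 / (n * (n + 3)) := by
  simp [invMulChooseTerm, show 2 * (n + 1) + 1 - n = n + 3 by omega]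

theorem invMulChooseSum_succ {n : ℕ} (hn : n ≠ 0) :
    2 * ((n : ℚ) + 1) * (2 * n + 3) * invMulChooseSum (n + 1)
      = ((n : ℚ) + 1) * (n + 2) * invMulChooseSum n + 3 * ((n : ℚ) + 2) := by
  have htele := sum_Ico_sub (invMulChooseCert n) (Nat.one_le_iff_ne_zero.mpr hn)
  rw [← sum_congr rfl fun k hk ↦ invMulChoose_telescoping (mem_Ico.mp hk).1 (mem_Ico.mp hk).2,
    sum_sub_distrib, ← mul_sum, ← mul_sum] at htele
  have hcert_one : invMulChooseCert n 1 = 0 := by simp [invMulChooseCert]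
  have hcert_self : invMulChooseCert n n = -((n : ℚ) - 1) / (n + 3) := by
    simp [invMulChooseCert, show 2 * n + 3 - n = n + 3 by omega]
  rw [hcert_one, hcert_self, sub_zero, sub_eq_iff_eq_add'] at htele
  rw [invMulChooseSum, invMulChooseSum, ← Ico_add_one_right_eq_Icc, ← Ico_add_one_right_eq_Icc,
    sum_Ico_succ_top (by omega), sum_Ico_succ_top (by omega), sum_Ico_succ_top (by omega),
    invMulChooseTerm_self, invMulChooseTerm_self, invMulChooseTerm_succ_self]
  have hn0 : (n : ℚ) ≠ 0 := by exact_mod_cast hn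
  push_cast
  rw [mul_add, mul_add, htele]
  field_simp
  ring

theorem invChooseSqSum_eq_invMulChooseSum (m : ℕ) :
    ((m : ℚ) + 2) * invChooseSqSum m = 2 * ((m : ℚ) + 1) ^ 2 * invMulChooseSum (m + 1) := by
  induction m with
  | zero => simp [invChooseSqSum, invMulChooseSum, invMulChooseTerm]
  | succ m ih =>
    have hS := invChooseSqSum_succ m
    have hB := invMulChooseSum_succ m.succ_ne_zero
    push_cast at hB ⊢
    refine mul_left_cancel₀ (show 2 * ((m : ℚ) + 1) ^ 2 * (2 * m + 5) ≠ 0 by positivity) ?_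
    linear_combination (m + 3) * hS - 2 * (m + 1) ^ 2 * (m + 2) * hB + (m + 3) * (m + 2) ^ 2 * ih

theorem sum_inv_binom_sq_eq_general (n : ℕ) :
    ∑ k ∈ Finset.range n, (1 : ℚ) / ((n - 1).choose k : ℚ) ^ 2 =
      (2 * (n : ℚ) ^ 2 / ((n : ℚ) + 1)) *
        ∑ k ∈ Finset.Icc 1 n, (1 : ℚ) / ((k : ℚ) * ((2 * n + 1 - k).choose (n - k) : ℚ)) := by
  rcases n with _ | m
  · simp
  have h := invChooseSqSum_eq_invMulChooseSum m
  simp only [invChooseSqSum, invMulChooseSum, invMulChooseTerm] at h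
  rw [Nat.add_sub_cancel, div_mul_eq_mul_div, eq_div_iff (by positivity)]
  push_cast
  linear_combination h

/-- For every positive integer `n`:
`∑_{k=0}^{n-1} 1/C(n-1,k)² = (2n²/(n+1)) · ∑_{k=1}^{n} 1/(k·C(2n+1-k, n-k))`
as an identity of rational numbers. -/
theorem sum_inv_binom_sq_eq (n : ℕ) (hn : 1 ≤ n) :
    ∑ k ∈ Finset.range n, (1 : ℚ) / ((n - 1).choose k : ℚ) ^ 2 =
      (2 * (n : ℚ) ^ 2 / ((n : ℚ) + 1)) *
        ∑ k ∈ Finset.Icc 1 n, (1 : ℚ) / ((k : ℚ) * ((2 * n + 1 - k).choose (n - k) : ℚ)) :=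
  sum_inv_binom_sq_eq_general n
end

section
/- Let p > 3 be a prime, let m be an integer with 1 ≤ m ≤ (p-1)/2, and let t be a p-adic integer. Then binom(m + pt - 1, (p-1)/2) · binom(-1 - pt - m, (p-1)/2) ≡ pt/m (mod p²) in the ring of p-adic integers. -/
/-- The generalized binomial coefficient `C(x, n) = x(x-1)⋯(x-n+1)/n!` for a
`p`-adic number `x` (a `p`-adic integer when `x` is). -/
noncomputable def padicChoose {p : ℕ} [Fact p.Prime] (x : ℚ_[p]) (n : ℕ) : ℚ_[p] :=
  (∏ j ∈ Finset.range n, (x - j)) / (n.factorial : ℚ_[p])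

/-! With `x = m + p t` and `q = (p - 1) / 2`, the product of the two binomial coefficients
is `∏_{j=1}^{q} (j² - x²) / q!²`. The factor `j = m` equals `-p t (2m + p t)`, so modulo `p²`
only the residues modulo `p` of the other factors matter. There
`-2m² ∏_{j ≠ m} (j² - m²) = (-1)^m (q-m)! (q+m)!`, and Wilson's theorem in the form
`a! b! ≡ (-1)^(a+1)` for `a + b = p - 1` shows that this and `q!²` are both `≡ (-1)^(q+1)`. -/

open Finset
open scoped Nat

theorem mul_prod_add_mul_of_mul_self_eq_zero {R ι : Type*} [CommRing R] {ε : R}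
    (hε : ε * ε = 0) (s : Finset ι) (a c : ι → R) :
    ε * ∏ j ∈ s, (a j + ε * c j) = ε * ∏ j ∈ s, a j := by
  classical
  induction s using Finset.induction_on with
  | empty => rfl
  | insert i s hi ih =>
    rw [prod_insert hi, prod_insert hi]
    linear_combination a i * ih + c i * (∏ j ∈ s, (a j + ε * c j)) * hε

theorem prod_range_erase_sub {q n : ℕ} (hn : n < q) :
    ∏ j ∈ (range q).erase n, ((j : ℤ) - n) = (-1) ^ n * n ! * (q - 1 - n)! := by
  have hsplit : (range q).erase n = range n ∪ Ico (n + 1) q := by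
    ext j; simp only [mem_erase, mem_range, mem_union, mem_Ico]; omega
  have hdisj : Disjoint (range n) (Ico (n + 1) q) := by
    rw [disjoint_left]; intro j hj hj'; simp only [mem_range, mem_Ico] at hj hj'; omega
  have hbelow : ∏ j ∈ range n, ((j : ℤ) - n) = (-1) ^ n * n ! := by
    rw [← prod_range_reflect, ← prod_range_add_one_eq_factorial, Nat.cast_prod,
      ← card_range n, ← prod_const, card_range, ← prod_mul_distrib]
    refine prod_congr rfl fun j hj => ?_
    have := mem_range.mp hj
    push_cast [Nat.cast_sub (show j ≤ n - 1 by omega), Nat.cast_sub (show 1 ≤ n by omega)]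
    ring
  have habove : ∏ j ∈ Ico (n + 1) q, ((j : ℤ) - n) = (q - 1 - n)! := by
    rw [prod_Ico_eq_prod_range, show q - (n + 1) = q - 1 - n by omega,
      ← prod_range_add_one_eq_factorial, Nat.cast_prod]
    refine prod_congr rfl fun j _ => ?_
    push_cast; ring
  rw [hsplit, prod_union hdisj, hbelow, habove]

theorem ZMod.factorial_mul_factorial_eq_neg_one_pow {p : ℕ} [Fact p.Prime] {a b : ℕ}
    (h : a + b + 1 = p) : (a ! * b ! : ZMod p) = (-1) ^ (a + 1) := by
  induction a generalizing b with
  | zero =>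
    obtain rfl : b = p - 1 := by omega
    simp [ZMod.wilsons_lemma]
  | succ a ih =>
    have hreflect : ((b + 1 : ℕ) : ZMod p) = -(a + 1 : ℕ) := by
      rw [eq_neg_iff_add_eq_zero, ← Nat.cast_add, show b + 1 + (a + 1) = p by omega,
        ZMod.natCast_self]
    have := ih (b := b + 1) (by omega)
    rw [Nat.factorial_succ b, Nat.cast_mul, hreflect] at this
    rw [Nat.factorial_succ a, pow_succ]
    push_cast at this ⊢
    linear_combination -this

theorem neg_two_mul_sq_mul_prod_erase_eq_factorial_mul_factorial {q m : ℕ} (hm1 : 1 ≤ m)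
    (hm2 : m ≤ q) :
    -2 * (m : ℤ) ^ 2 * ∏ j ∈ (range q).erase (m - 1), (((j : ℤ) + 1) ^ 2 - m ^ 2) =
      (-1) ^ m * (q - m)! * (q + m)! := by
  obtain ⟨n, rfl⟩ := Nat.exists_eq_add_of_le' hm1
  have hmem : n ∈ range q := mem_range.mpr (by omega)
  have hminus := prod_range_erase_sub (mem_range.mp hmem)
  have hplus :
      2 * ((n + 1 : ℕ) : ℤ) * ∏ j ∈ (range q).erase n, ((j : ℤ) + 1 + (n + 1 : ℕ)) =
        ∏ j ∈ range q, ((j : ℤ) + 1 + (n + 1 : ℕ)) := by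
    rw [← mul_prod_erase _ _ hmem]; push_cast; ring
  have hasc :
      ((n + 1)! : ℤ) * ∏ j ∈ range q, ((j : ℤ) + 1 + (n + 1 : ℕ)) = (q + (n + 1))! := by
    rw [add_comm q, ← Nat.factorial_mul_ascFactorial (n + 1) q,
      Nat.ascFactorial_eq_prod_range]
    push_cast; congr 1; exact prod_congr rfl fun j _ => by ring
  have hsplit : ∏ j ∈ (range q).erase n, (((j : ℤ) + 1) ^ 2 - ((n + 1 : ℕ) : ℤ) ^ 2) =
      (∏ j ∈ (range q).erase n, ((j : ℤ) - n)) *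
        ∏ j ∈ (range q).erase n, ((j : ℤ) + 1 + (n + 1 : ℕ)) := by
    rw [← prod_mul_distrib]; exact prod_congr rfl fun j _ => by push_cast; ring
  rw [Nat.add_sub_cancel, hsplit, hminus, ← hasc, ← hplus,
    show q - 1 - n = q - (n + 1) by omega, Nat.factorial_succ]
  push_cast; ring

theorem ZMod.neg_two_mul_sq_mul_prod_erase_eq_factorial_sq {p q m : ℕ} [Fact p.Prime]
    (hq : 2 * q + 1 = p) (hm1 : 1 ≤ m) (hm2 : m ≤ q) :
    -2 * (m : ZMod p) ^ 2 * ∏ j ∈ (range q).erase (m - 1), (((j : ZMod p) + 1) ^ 2 - m ^ 2) =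
      (q ! : ZMod p) ^ 2 := by
  have hint := congrArg (Int.cast : ℤ → ZMod p)
    (neg_two_mul_sq_mul_prod_erase_eq_factorial_mul_factorial hm1 hm2)
  push_cast at hint
  rw [hint, mul_assoc, mul_comm ((q - m)! : ZMod p),
    ZMod.factorial_mul_factorial_eq_neg_one_pow (show q + m + (q - m) + 1 = p by omega), sq,
    ZMod.factorial_mul_factorial_eq_neg_one_pow (show q + q + 1 = p by omega)]
  rw [← pow_add, show m + (q + m + 1) = q + 1 + 2 * m by ring, pow_add, pow_mul]
  simp

theorem ZMod.natCast_mul_intCast_eq_of_intCast_eq {p : ℕ} {a b : ℤ} (h : (a : ZMod p) = b) :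
    (p : ZMod (p ^ 2)) * a = p * b := by
  obtain ⟨k, hk⟩ := (ZMod.intCast_eq_intCast_iff_dvd_sub b a p).mp h.symm
  rw [← sub_eq_zero, ← mul_sub, ← Int.cast_sub, hk]
  push_cast
  rw [← mul_assoc, ← sq, ← Nat.cast_pow, ZMod.natCast_self, zero_mul]

theorem ZMod.natCast_mul_prod_sq_sub_sq {p q m : ℕ} [Fact p.Prime] (hq : 2 * q + 1 = p)
    (hm1 : 1 ≤ m) (hm2 : m ≤ q) (τ : ZMod (p ^ 2)) :
    (m : ZMod (p ^ 2)) *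
        ∏ j ∈ range q,
          (((j : ZMod (p ^ 2)) + 1) ^ 2 - ((m : ZMod (p ^ 2)) + (p : ZMod (p ^ 2)) * τ) ^ 2) =
      (p : ZMod (p ^ 2)) * τ * (q ! : ZMod (p ^ 2)) ^ 2 := by
  set ε : ZMod (p ^ 2) := (p : ZMod (p ^ 2)) * τ with hε_def
  set A : ZMod (p ^ 2) :=
    ∏ j ∈ (range q).erase (m - 1), (((j : ZMod (p ^ 2)) + 1) ^ 2 - (m : ZMod (p ^ 2)) ^ 2)
  have hε : ε * ε = 0 := by
    rw [show ε * ε = ((p ^ 2 : ℕ) : ZMod (p ^ 2)) * τ ^ 2 by push_cast; ring,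
      ZMod.natCast_self, zero_mul]
  have hmod :
      (((-2 * m ^ 2 * ∏ j ∈ (range q).erase (m - 1), (((j : ℤ) + 1) ^ 2 - m ^ 2) : ℤ)) :
        ZMod p) = ((q ! ^ 2 : ℤ) : ZMod p) := by
    push_cast; exact ZMod.neg_two_mul_sq_mul_prod_erase_eq_factorial_sq hq hm1 hm2
  have hlift : (p : ZMod (p ^ 2)) * (-2 * m ^ 2 * A) = p * q ! ^ 2 := by
    simpa [A] using ZMod.natCast_mul_intCast_eq_of_intCast_eq hmod
  have hfactor : ∀ j ∈ (range q).erase (m - 1),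
      ((j : ZMod (p ^ 2)) + 1) ^ 2 - ((m : ZMod (p ^ 2)) + ε) ^ 2 =
        (((j : ZMod (p ^ 2)) + 1) ^ 2 - (m : ZMod (p ^ 2)) ^ 2) + ε * -(2 * m + ε) :=
    fun j _ => by ring
  have hrest := mul_prod_add_mul_of_mul_self_eq_zero hε ((range q).erase (m - 1))
    (fun j => ((j : ZMod (p ^ 2)) + 1) ^ 2 - (m : ZMod (p ^ 2)) ^ 2) (fun _ => -(2 * m + ε))
  rw [← mul_prod_erase _ _ (show m - 1 ∈ range q from mem_range.mpr (by omega)),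
    Nat.cast_sub hm1, Nat.cast_one, sub_add_cancel, prod_congr rfl hfactor]
  linear_combination -(m * (2 * m + ε)) * hrest + τ * hlift - m * A * hε
    + (-2 * m ^ 2 * A - q ! ^ 2) * hε_def

@[norm_cast]
theorem PadicInt.coe_prod {p : ℕ} [Fact p.Prime] {ι : Type*} (s : Finset ι)
    (f : ι → ℤ_[p]) :
    ((∏ i ∈ s, f i : ℤ_[p]) : ℚ_[p]) = ∏ i ∈ s, (f i : ℚ_[p]) :=
  map_prod PadicInt.Coe.ringHom f s

theorem PadicInt.norm_sub_le_pow_of_toZModPow_eq {p : ℕ} [Fact p.Prime] {x y : ℤ_[p]} {n : ℕ}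
    (h : toZModPow n x = toZModPow n y) : ‖x - y‖ ≤ (p : ℝ) ^ (-n : ℤ) := by
  rw [norm_le_pow_iff_mem_span_pow, ← ker_toZModPow, RingHom.mem_ker, map_sub, h, sub_self]

theorem padicChoose_sub_one_mul_padicChoose_neg_sub_one {p : ℕ} [Fact p.Prime] (x : ℚ_[p])
    (n : ℕ) : padicChoose (x - 1) n * padicChoose (-1 - x) n =
      (∏ j ∈ range n, (((j : ℚ_[p]) + 1) ^ 2 - x ^ 2)) / (n ! : ℚ_[p]) ^ 2 := by
  unfold padicChoose
  rw [div_mul_div_comm, ← prod_mul_distrib, ← sq]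
  exact congrArg (· / _) (prod_congr rfl fun j _ => by ring)

theorem padicChoose_mul_padicChoose_congr_general (p : ℕ) [Fact p.Prime]
    (m : ℕ) (hm1 : 1 ≤ m) (hm2 : m ≤ (p - 1) / 2) (t : ℤ_[p]) :
    ‖padicChoose ((m : ℚ_[p]) + (p : ℚ_[p]) * (t : ℚ_[p]) - 1) ((p - 1) / 2) *
        padicChoose (-1 - (p : ℚ_[p]) * (t : ℚ_[p]) - (m : ℚ_[p])) ((p - 1) / 2) -
      (p : ℚ_[p]) * (t : ℚ_[p]) / (m : ℚ_[p])‖ ≤ (p : ℝ) ^ (-2 : ℤ) := by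
  have hp : p.Prime := Fact.out
  set q := (p - 1) / 2
  have hq : 2 * q + 1 = p := by have := hp.eq_two_or_odd; omega
  have hm : ‖(m : ℚ_[p])‖ = 1 := Padic.norm_natCast_eq_one_iff.mpr
    (hp.coprime_iff_not_dvd.mpr (Nat.not_dvd_of_pos_of_lt hm1 (by omega)))
  have hfac : ‖(q ! : ℚ_[p])‖ = 1 := Padic.norm_natCast_eq_one_iff.mpr
    (hp.coprime_iff_not_dvd.mpr (by rw [hp.dvd_factorial]; omega))
  have hcongr : ‖(m : ℤ_[p]) * ∏ j ∈ range q, (((j : ℤ_[p]) + 1) ^ 2 - (m + p * t) ^ 2) -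
      p * t * (q ! : ℤ_[p]) ^ 2‖ ≤ (p : ℝ) ^ (-2 : ℤ) :=
    PadicInt.norm_sub_le_pow_of_toZModPow_eq (n := 2) (by
      simp only [map_mul, map_prod, map_sub, map_pow, map_add, map_natCast, map_one]
      exact ZMod.natCast_mul_prod_sq_sub_sq hq hm1 hm2 _)
  rw [show -1 - (p : ℚ_[p]) * t - m = -1 - (m + p * t) by ring,
    padicChoose_sub_one_mul_padicChoose_neg_sub_one]
  have hm0 : (m : ℚ_[p]) ≠ 0 := norm_ne_zero_iff.mp (by rw [hm]; exact one_ne_zero)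
  have hfac0 : (q ! : ℚ_[p]) ≠ 0 := norm_ne_zero_iff.mp (by rw [hfac]; exact one_ne_zero)
  calc _ = ‖((m * ∏ j ∈ range q, (((j : ℤ_[p]) + 1) ^ 2 - (m + p * t) ^ 2) -
        p * t * (q ! : ℤ_[p]) ^ 2 : ℤ_[p]) : ℚ_[p]) / (m * (q ! : ℚ_[p]) ^ 2)‖ := by
        congr 1; push_cast; field_simp
    _ ≤ _ := by rwa [norm_div, norm_mul, norm_pow, hm, hfac, PadicInt.padic_norm_e_of_padicInt,
        one_pow, mul_one, div_one]

/-- For a prime `p > 3`, an integer `1 ≤ m ≤ (p-1)/2`, and a `p`-adic integer `t`: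
`C(m + pt - 1, (p-1)/2) · C(-1 - pt - m, (p-1)/2) ≡ pt/m (mod p²)` in `ℤ_p`,
i.e. the difference has `p`-adic norm at most `p^{-2}`. -/
theorem padicChoose_mul_padicChoose_congr (p : ℕ) [Fact p.Prime] (hp : 3 < p)
    (m : ℕ) (hm1 : 1 ≤ m) (hm2 : m ≤ (p - 1) / 2) (t : ℤ_[p]) :
    ‖padicChoose ((m : ℚ_[p]) + (p : ℚ_[p]) * (t : ℚ_[p]) - 1) ((p - 1) / 2) *
        padicChoose (-1 - (p : ℚ_[p]) * (t : ℚ_[p]) - (m : ℚ_[p])) ((p - 1) / 2) -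
      (p : ℚ_[p]) * (t : ℚ_[p]) / (m : ℚ_[p])‖ ≤ (p : ℝ) ^ (-2 : ℤ) :=
  padicChoose_mul_padicChoose_congr_general p m hm1 hm2 t
end

section
/- Let p > 3 be a prime, let m be an integer with (p+1)/2 ≤ m ≤ p-1, and let t be a p-adic integer. Then binom(m + pt - 1, (p-1)/2) · binom(-1 - pt - m, (p-1)/2) ≡ p(t+1)/m (mod p²) in the ring of p-adic integers. -/
open Finset

namespace ZMod

variable {p : ℕ} [Fact p.Prime]

theorem prod_range_erase_add_eq_neg_one {y : ZMod p} {k₀ : ℕ} (hk₀ : k₀ < p)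
    (hy : y + k₀ = 0) : ∏ k ∈ (range p).erase k₀, (y + k) = -1 := by
  have hval {k : ℕ} (hk : k < p) : (k : ZMod p).val = k := val_natCast_of_lt hk
  rw [← prod_Ico_one_prime p]
  refine prod_nbij' (fun k ↦ (y + k).val) (fun i ↦ ((i : ZMod p) - y).val) ?_ ?_ ?_ ?_ ?_
  · intro k hk
    obtain ⟨hne, hk⟩ := mem_erase.mp hk
    refine mem_Ico.mpr ⟨Nat.one_le_iff_ne_zero.mpr fun h ↦ hne ?_, val_lt _⟩
    rw [val_eq_zero, ← hy, add_right_inj] at h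
    rw [← hval (mem_range.mp hk), h, hval hk₀]
  · intro i hi
    obtain ⟨hi1, hip⟩ := mem_Ico.mp hi
    refine mem_erase.mpr ⟨fun h ↦ ?_, mem_range.mpr (val_lt _)⟩
    have : (i : ZMod p) = 0 := by
      rw [← hy, ← h, natCast_zmod_val, add_sub_cancel]
    rw [natCast_eq_zero_iff] at this
    exact absurd (Nat.le_of_dvd hi1 this) (not_le.mpr hip)
  · intro k hk
    simp [hval (mem_range.mp (mem_of_mem_erase hk))]
  · intro i hi
    simp [hval (mem_Ico.mp hi).2]
  · intro k _
    simp

end ZMod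

namespace PadicInt

variable {p : ℕ} [Fact p.Prime]

theorem coe_prod_s14 {α : Type*} (s : Finset α) (f : α → ℤ_[p]) :
    ((∏ z ∈ s, f z : ℤ_[p]) : ℚ_[p]) = ∏ z ∈ s, (f z : ℚ_[p]) :=
  map_prod Coe.ringHom f s

theorem norm_lt_one_iff_toZMod_eq_zero (z : ℤ_[p]) : ‖z‖ < 1 ↔ toZMod z = 0 := by
  rw [← RingHom.mem_ker, ker_toZMod, IsLocalRing.mem_maximalIdeal, mem_nonunits]

theorem norm_eq_one_of_toZMod_ne_zero {z : ℤ_[p]} (h : toZMod z ≠ 0) : ‖z‖ = 1 :=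
  (norm_le_one z).antisymm <| not_lt.mp <| (norm_lt_one_iff_toZMod_eq_zero z).not.mpr h

theorem norm_le_inv_of_toZMod_eq_zero {z : ℤ_[p]} (h : toZMod z = 0) :
    ‖z‖ ≤ (p : ℝ)⁻¹ := by
  have := (norm_lt_one_iff_toZMod_eq_zero z).mpr h
  rwa [← zpow_zero (p : ℝ), norm_lt_pow_iff_norm_le_pow_sub_one, zero_sub, zpow_neg_one] at this

theorem toZMod_prod_range_erase_add {y : ℤ_[p]} {k₀ : ℕ} (hk₀ : k₀ < p)
    (hy : toZMod (y + (k₀ : ℤ_[p])) = 0) :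
    toZMod (∏ k ∈ (range p).erase k₀, (y + (k : ℤ_[p]))) = -1 := by
  rw [map_add, map_natCast] at hy
  simpa only [map_prod, map_add, map_natCast] using ZMod.prod_range_erase_add_eq_neg_one hk₀ hy

theorem norm_p_mul_div_sub_p_mul_div_le {s u v u' v' : ℤ_[p]} (hv : toZMod v ≠ 0)
    (hv' : toZMod v' ≠ 0) (h : toZMod u * toZMod v' = toZMod u' * toZMod v) :
    ‖(p * s * u / v : ℚ_[p]) - p * s * u' / v'‖ ≤ (p : ℝ) ^ (-2 : ℤ) := by
  have hv₀ : (v : ℚ_[p]) ≠ 0 := coe_ne_zero.mpr fun h ↦ hv (by simp [h])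
  have hv'₀ : (v' : ℚ_[p]) ≠ 0 := coe_ne_zero.mpr fun h ↦ hv' (by simp [h])
  have hsplit : (p * s * u / v : ℚ_[p]) - p * s * u' / v' =
      p * ((s * (u * v' - u' * v) : ℤ_[p]) : ℚ_[p]) / ((v * v' : ℤ_[p]) : ℚ_[p]) := by
    push_cast
    field_simp
  have hdiff : ‖u * v' - u' * v‖ ≤ (p : ℝ)⁻¹ :=
    norm_le_inv_of_toZMod_eq_zero (by rw [map_sub, map_mul, map_mul, h, sub_self])
  rw [hsplit, norm_div, norm_mul, padic_norm_e_of_padicInt, padic_norm_e_of_padicInt, norm_mul,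
    norm_mul, norm_eq_one_of_toZMod_ne_zero hv, norm_eq_one_of_toZMod_ne_zero hv', Padic.norm_p,
    mul_one, div_one, zpow_neg, zpow_two, _root_.mul_inv]
  gcongr
  calc ‖s‖ * ‖u * v' - u' * v‖ ≤ 1 * (p : ℝ)⁻¹ := by gcongr; exact norm_le_one s
    _ = (p : ℝ)⁻¹ := one_mul _

end PadicInt

theorem neg_one_pow_mul_self {R : Type*} [Ring R] (n : ℕ) : (-1 : R) ^ n * (-1) ^ n = 1 := by
  rw [← pow_add, ← two_mul, pow_mul, neg_one_sq, one_pow]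

theorem prod_range_sub_mul_prod_range_neg_sub {R : Type*} [CommRing R] (q : ℕ) (x : R) :
    (∏ j ∈ range q, (x - 1 - j)) * ∏ j ∈ range q, (-1 - x - j) =
      (-1) ^ q * ∏ k ∈ (range (2 * q + 1)).erase q, (x - q + k) := by
  have hsplit : (range (2 * q + 1)).erase q = range q ∪ Ico (q + 1) (2 * q + 1) := by
    ext k
    simp only [mem_erase, mem_range, mem_union, mem_Ico]
    omega
  have hdisj : Disjoint (range q) (Ico (q + 1) (2 * q + 1)) :=
    disjoint_left.mpr fun k h₁ h₂ ↦ by simp only [mem_range, mem_Ico] at h₁ h₂; omega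
  have hlow : ∏ k ∈ range q, (x - q + k) = ∏ j ∈ range q, (x - 1 - j) := by
    rw [← prod_range_reflect]
    refine prod_congr rfl fun j hj ↦ ?_
    rw [Nat.sub_sub, Nat.cast_sub (by rw [mem_range] at hj; omega)]
    push_cast
    ring
  have hhigh : ∏ k ∈ Ico (q + 1) (2 * q + 1), (x - q + k) =
      (-1) ^ q * ∏ j ∈ range q, (-1 - x - j) := by
    rw [prod_Ico_eq_prod_range, show 2 * q + 1 - (q + 1) = q by omega, prod_congr rfl fun j _ ↦
        show x - q + (q + 1 + j : ℕ) = -1 * (-1 - x - j) by push_cast; ring,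
      prod_mul_distrib, prod_const, card_range]
  rw [hsplit, prod_union hdisj, hlow, hhigh]
  linear_combination -((∏ j ∈ range q, (x - 1 - j)) * ∏ j ∈ range q, (-1 - x - j)) *
    neg_one_pow_mul_self (R := R) q

theorem prod_range_neg_one_sub {R : Type*} [CommRing R] (q : ℕ) :
    ∏ j ∈ range q, (-1 - j : R) = (-1) ^ q * q.factorial := by
  rw [prod_congr rfl fun (j : ℕ) _ ↦
      show (-1 - j : R) = -1 * ((j + 1 : ℕ) : R) by push_cast; ring,
    prod_mul_distrib, prod_const, card_range, ← Nat.cast_prod, prod_range_add_one_eq_factorial]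

-- The factor `x - q + k` is `x - i` with `i = q - k`, so both products run over `0 < |i| ≤ q`.
theorem padicChoose_sub_one_mul_padicChoose_neg_one_sub {p : ℕ} [Fact p.Prime] (q : ℕ)
    (x : ℚ_[p]) :
    padicChoose (x - 1) q * padicChoose (-1 - x) q =
      (∏ k ∈ (range (2 * q + 1)).erase q, (x - q + k)) /
        ∏ k ∈ (range (2 * q + 1)).erase q, (-q + k : ℚ_[p]) := by
  have h₀ := prod_range_sub_mul_prod_range_neg_sub q (0 : ℚ_[p])
  simp only [zero_sub, sub_zero, prod_range_neg_one_sub] at h₀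
  rw [mul_mul_mul_comm, neg_one_pow_mul_self, one_mul] at h₀
  rw [padicChoose, padicChoose, div_mul_div_comm, prod_range_sub_mul_prod_range_neg_sub, h₀,
    mul_div_mul_left _ _ (pow_ne_zero _ (neg_ne_zero.mpr one_ne_zero))]

theorem padicChoose_sub_one_mul_padicChoose_neg_one_sub_eq_mul_div {p : ℕ} [Fact p.Prime]
    {q k₀ : ℕ} (hk₀ : k₀ < 2 * q + 1) {x : ℚ_[p]} (hx : x ≠ 0) :
    padicChoose (x - 1) q * padicChoose (-1 - x) q =
      (x - q + k₀ : ℚ_[p]) * (∏ k ∈ (range (2 * q + 1)).erase k₀, (x - q + k)) /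
        (x * ∏ k ∈ (range (2 * q + 1)).erase q, (-q + k : ℚ_[p])) := by
  rw [mul_prod_erase _ (fun k : ℕ ↦ x - q + k) (mem_range.mpr hk₀),
    ← mul_prod_erase _ (fun k : ℕ ↦ x - q + k) (mem_range.mpr (show q < 2 * q + 1 by omega)),
    sub_add_cancel, mul_div_mul_left _ _ hx, padicChoose_sub_one_mul_padicChoose_neg_one_sub]

/-- For a prime `p > 3`, an integer `(p+1)/2 ≤ m ≤ p-1`, and a `p`-adic integer `t`:
`C(m + pt - 1, (p-1)/2) · C(-1 - pt - m, (p-1)/2) ≡ p(t+1)/m (mod p²)` in `ℤ_p`,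
i.e. the difference has `p`-adic norm at most `p^{-2}`. -/
theorem padicChoose_mul_padicChoose_congr_large_m (p : ℕ) [Fact p.Prime] (hp : 3 < p)
    (m : ℕ) (hm1 : (p + 1) / 2 ≤ m) (hm2 : m ≤ p - 1) (t : ℤ_[p]) :
    ‖padicChoose ((m : ℚ_[p]) + (p : ℚ_[p]) * (t : ℚ_[p]) - 1) ((p - 1) / 2) *
        padicChoose (-1 - (p : ℚ_[p]) * (t : ℚ_[p]) - (m : ℚ_[p])) ((p - 1) / 2) -
      (p : ℚ_[p]) * ((t : ℚ_[p]) + 1) / (m : ℚ_[p])‖ ≤ (p : ℝ) ^ (-2 : ℤ) := by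
  have hp_odd : p % 2 = 1 := Nat.odd_iff.mp ((Fact.out : p.Prime).odd_of_ne_two (by omega))
  set q := (p - 1) / 2
  have hpq : p = 2 * q + 1 := by omega
  set k₀ := q + (p - m)
  set X : ℤ_[p] := m + p * t
  set U := ∏ k ∈ (range p).erase k₀, (X - q + k)
  set H₀ := ∏ k ∈ (range p).erase q, (-q + k : ℤ_[p])
  have hX : PadicInt.toZMod X = m := by simp [X]
  have hm : (m : ZMod p) ≠ 0 := by
    rw [Ne, ZMod.natCast_eq_zero_iff]
    exact fun h ↦ absurd (Nat.le_of_dvd (by omega) h) (by omega)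
  have hk₀ : X - q + k₀ = p * (1 + t) := by
    simp only [X, k₀]
    push_cast [Nat.cast_sub (show m ≤ p by omega)]
    ring
  have hU : PadicInt.toZMod U = -1 := PadicInt.toZMod_prod_range_erase_add (by omega)
    (by rw [hk₀, map_mul, map_natCast, ZMod.natCast_self, zero_mul])
  have hH₀ : PadicInt.toZMod H₀ = -1 := PadicInt.toZMod_prod_range_erase_add (by omega)
    (by rw [neg_add_cancel, map_zero])
  have hXH₀ : PadicInt.toZMod (X * H₀) ≠ 0 := by
    rwa [map_mul, hX, hH₀, mul_neg_one, neg_ne_zero]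
  convert PadicInt.norm_p_mul_div_sub_p_mul_div_le (s := 1 + t) (u' := 1) (v' := m) hXH₀
    (by rwa [map_natCast]) (by rw [hU, map_natCast, map_one, map_mul, hX, hH₀]; ring) using 3
  · have hX₀ : (X : ℚ_[p]) ≠ 0 :=
      PadicInt.coe_ne_zero.mpr fun h ↦ hm (by rw [← hX, h, map_zero])
    have hk₀' : (X - q + k₀ : ℚ_[p]) = p * (1 + t) :=
      mod_cast congrArg ((↑) : ℤ_[p] → ℚ_[p]) hk₀
    rw [show (-1 - p * t - m : ℚ_[p]) = -1 - X by push_cast [X]; ring,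
      show (m + p * t - 1 : ℚ_[p]) = X - 1 by push_cast [X]; ring,
      padicChoose_sub_one_mul_padicChoose_neg_one_sub_eq_mul_div (q := q) (k₀ := k₀) (by omega)
        hX₀, ← hpq]
    push_cast [hk₀', U, H₀, PadicInt.coe_prod_s14]
    rfl
  · push_cast
    ring
end

section
/- Let p > 3 be a prime, let k be an integer with 1 ≤ k ≤ p-1, and let t be a p-adic integer. Then binom(pt, k) · binom(-1 - pt, k) ≡ -p²t²/k² - pt/k (mod p³) in the ring of p-adic integers. -/
open Finset Nat

theorem norm_prod_sub_prod_le {ι R : Type*} [NormedCommRing R] [NormOneClass R]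
    [IsUltrametricDist R] (s : Finset ι) {f g : ι → R} {ε : ℝ} (hε : 0 ≤ ε)
    (hf : ∀ i ∈ s, ‖f i‖ ≤ 1) (hg : ∀ i ∈ s, ‖g i‖ ≤ 1) (hfg : ∀ i ∈ s, ‖f i - g i‖ ≤ ε) :
    ‖∏ i ∈ s, f i - ∏ i ∈ s, g i‖ ≤ ε := by
  classical
  induction s using Finset.induction_on with
  | empty => simpa using hε
  | insert a s ha ih =>
    simp only [forall_mem_insert] at hf hg hfg
    rw [prod_insert ha, prod_insert ha,
      show f a * ∏ i ∈ s, f i - g a * ∏ i ∈ s, g i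
        = (f a - g a) * ∏ i ∈ s, f i + g a * (∏ i ∈ s, f i - ∏ i ∈ s, g i) by ring]
    have hprod : ‖∏ i ∈ s, f i‖ ≤ 1 :=
      (Finset.norm_prod_le _ _).trans (prod_le_one (fun _ _ ↦ norm_nonneg _) hf.2)
    refine (IsUltrametricDist.norm_add_le_max _ _).trans (max_le ?_ ?_)
    · exact (norm_mul_le _ _).trans (by nlinarith [norm_nonneg (∏ i ∈ s, f i), hfg.1])
    · exact (norm_mul_le _ _).trans (by nlinarith [norm_nonneg (g a), ih hf.2 hg.2 hfg.2])

theorem prod_sub_mul_prod_neg_one_sub {R : Type*} [CommRing R] (x : R) (m : ℕ) :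
    (∏ j ∈ range (m + 1), (x - j)) * ∏ j ∈ range (m + 1), (-1 - x - j)
      = -(x * (x + (m + 1))) * ∏ j ∈ range m, (((j : R) + 1) ^ 2 - x ^ 2) := by
  induction m with
  | zero =>
    rw [zero_add, prod_range_one, prod_range_one, prod_range_zero]
    push_cast
    ring
  | succ m ih =>
    rw [prod_range_succ (fun j : ℕ ↦ x - j) (m + 1),
      prod_range_succ (fun j : ℕ ↦ -1 - x - j) (m + 1),
      prod_range_succ (fun j : ℕ ↦ ((j : R) + 1) ^ 2 - x ^ 2) m, mul_mul_mul_comm, ih]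
    push_cast
    ring

theorem Padic.norm_factorial_eq_one {p : ℕ} [Fact p.Prime] {n : ℕ} (hn : n < p) :
    ‖(n ! : ℚ_[p])‖ = 1 := by
  rw [Padic.norm_natCast_eq_one_iff, Nat.Prime.coprime_iff_not_dvd Fact.out,
    Nat.Prime.dvd_factorial Fact.out]
  omega

theorem norm_prod_sq_sub_sq_sub_factorial_sq_le {K : Type*} [NormedField K] [IsUltrametricDist K]
    {x : K} (hx : ‖x‖ ≤ 1) (m : ℕ) :
    ‖∏ j ∈ range m, (((j : K) + 1) ^ 2 - x ^ 2) - (m ! : K) ^ 2‖ ≤ ‖x‖ ^ 2 := by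
  have hsq : ∀ j : ℕ, ‖((j : K) + 1) ^ 2‖ ≤ 1 := fun j ↦ by
    rw [norm_pow]
    exact pow_le_one₀ (norm_nonneg _) (mod_cast IsUltrametricDist.norm_natCast_le_one K (j + 1))
  rw [← prod_range_add_one_eq_factorial, Nat.cast_prod, ← prod_pow]
  refine norm_prod_sub_prod_le _ (by positivity) (fun j _ ↦ ?_) (fun j _ ↦ ?_) (fun j _ ↦ ?_)
  · rw [sub_eq_add_neg]
    refine (IsUltrametricDist.norm_add_le_max _ _).trans (max_le (hsq j) ?_)
    simpa using hx
  · simpa using hsq j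
  · simp

section padicChoose

variable {p : ℕ} [Fact p.Prime]

theorem padicChoose_succ_mul_padicChoose_neg_one_sub_sub (x : ℚ_[p]) (m : ℕ) :
    padicChoose x (m + 1) * padicChoose (-1 - x) (m + 1)
        - (-x ^ 2 / ((m : ℚ_[p]) + 1) ^ 2 - x / ((m : ℚ_[p]) + 1))
      = -(x * (x + ((m : ℚ_[p]) + 1)))
        * (∏ j ∈ range m, (((j : ℚ_[p]) + 1) ^ 2 - x ^ 2) - (m ! : ℚ_[p]) ^ 2)
        / ((m + 1)! : ℚ_[p]) ^ 2 := by
  rw [padicChoose, padicChoose, _root_.div_mul_div_comm, prod_sub_mul_prod_neg_one_sub, ← sq,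
    Nat.factorial_succ]
  have hm : (m ! : ℚ_[p]) ≠ 0 := Nat.cast_ne_zero.2 m.factorial_ne_zero
  push_cast
  field_simp
  ring

theorem norm_padicChoose_mul_padicChoose_neg_one_sub_sub_le {x : ℚ_[p]} (hx : ‖x‖ ≤ 1) {k : ℕ}
    (hk1 : 1 ≤ k) (hkp : k < p) :
    ‖padicChoose x k * padicChoose (-1 - x) k - (-x ^ 2 / (k : ℚ_[p]) ^ 2 - x / (k : ℚ_[p]))‖
      ≤ ‖x‖ ^ 3 := by
  obtain ⟨m, rfl⟩ := Nat.exists_eq_add_of_le' hk1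
  have hxk : ‖x + ((m : ℚ_[p]) + 1)‖ ≤ 1 := by
    simpa using (IsUltrametricDist.norm_add_le_max _ _).trans
      (max_le hx (IsUltrametricDist.norm_natCast_le_one ℚ_[p] (m + 1)))
  push_cast
  rw [padicChoose_succ_mul_padicChoose_neg_one_sub_sub, norm_div, norm_pow,
    Padic.norm_factorial_eq_one hkp, one_pow, div_one, norm_mul, norm_neg, norm_mul]
  calc ‖x‖ * ‖x + ((m : ℚ_[p]) + 1)‖ * ‖_‖ ≤ ‖x‖ * 1 * ‖x‖ ^ 2 := by
        gcongr
        exact norm_prod_sq_sub_sq_sub_factorial_sq_le hx m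
    _ = ‖x‖ ^ 3 := by ring

end padicChoose

theorem padicChoose_pt_mul_padicChoose_neg_general (p : ℕ) [Fact p.Prime]
    (k : ℕ) (hk1 : 1 ≤ k) (hk2 : k ≤ p - 1) (t : ℤ_[p]) :
    ‖padicChoose ((p : ℚ_[p]) * (t : ℚ_[p])) k *
        padicChoose (-1 - (p : ℚ_[p]) * (t : ℚ_[p])) k -
      (-((p : ℚ_[p]) ^ 2 * (t : ℚ_[p]) ^ 2) / (k : ℚ_[p]) ^ 2
        - (p : ℚ_[p]) * (t : ℚ_[p]) / (k : ℚ_[p]))‖ ≤ (p : ℝ) ^ (-3 : ℤ) := by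
  have hp : 1 ≤ (p : ℝ) := mod_cast (Fact.out : p.Prime).one_lt.le
  rw [← mul_pow]
  set x := (p : ℚ_[p]) * (t : ℚ_[p])
  have hx : ‖x‖ ≤ (p : ℝ)⁻¹ := by
    simpa [x, Padic.norm_p] using mul_le_mul_of_nonneg_left t.norm_le_one (by positivity)
  calc _ ≤ ‖x‖ ^ 3 := norm_padicChoose_mul_padicChoose_neg_one_sub_sub_le
        (hx.trans (inv_le_one_of_one_le₀ hp)) hk1 (by omega)
    _ ≤ ((p : ℝ)⁻¹) ^ 3 := by gcongr
    _ = (p : ℝ) ^ (-3 : ℤ) := by rw [inv_pow, zpow_neg, zpow_ofNat]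

/-- For a prime `p > 3`, an integer `1 ≤ k ≤ p-1`, and a `p`-adic integer `t`:
`C(pt, k) · C(-1 - pt, k) ≡ -p²t²/k² - pt/k (mod p³)` in `ℤ_p`,
i.e. the difference has `p`-adic norm at most `p^{-3}`. -/
theorem padicChoose_pt_mul_padicChoose_neg (p : ℕ) [Fact p.Prime] (hp : 3 < p)
    (k : ℕ) (hk1 : 1 ≤ k) (hk2 : k ≤ p - 1) (t : ℤ_[p]) :
    ‖padicChoose ((p : ℚ_[p]) * (t : ℚ_[p])) k *
        padicChoose (-1 - (p : ℚ_[p]) * (t : ℚ_[p])) k -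
      (-((p : ℚ_[p]) ^ 2 * (t : ℚ_[p]) ^ 2) / (k : ℚ_[p]) ^ 2
        - (p : ℚ_[p]) * (t : ℚ_[p]) / (k : ℚ_[p]))‖ ≤ (p : ℝ) ^ (-3 : ℤ) :=
  padicChoose_pt_mul_padicChoose_neg_general p k hk1 hk2 t
end

section
/- Let p > 3 be a prime, set n = (p-1)/2, and let t be a p-adic integer. Then ∑_{k=0}^{n} binom(pt, k) · binom(-1 - pt, k) ≡ 1 - p·t·H_n (mod p²) in the ring of p-adic integers, where H_n = ∑_{k=1}^{n} 1/k is the n-th harmonic number. -/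
section Aux

variable {p : ℕ} [Fact p.Prime]

/-- Ultrametric bound for sums in `ℚ_[p]`. -/
lemma padic_norm_sum_le {ι : Type*} (s : Finset ι) (f : ι → ℚ_[p]) (C : ℝ)
    (h0 : 0 ≤ C) (h : ∀ i ∈ s, ‖f i‖ ≤ C) : ‖∑ i ∈ s, f i‖ ≤ C := by
  classical
  induction s using Finset.induction with
  | empty => simpa using h0
  | @insert a s' hx ih =>
    rw [Finset.sum_insert hx]
    refine le_trans (Padic.nonarchimedean _ _) (max_le ?_ ?_)
    · exact h a (Finset.mem_insert_self a s')
    · exact ih fun i hi => h i (Finset.mem_insert_of_mem hi)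

/-- Ultrametric bound: two products whose factors are close are close. -/
lemma padic_norm_prod_sub_prod_le (x y : ℕ → ℚ_[p]) (ε : ℝ) (hε : 0 ≤ ε) (m : ℕ)
    (hx : ∀ j < m, ‖x j‖ ≤ 1) (hy : ∀ j < m, ‖y j‖ ≤ 1)
    (hxy : ∀ j < m, ‖x j - y j‖ ≤ ε) :
    ‖∏ j ∈ Finset.range m, x j - ∏ j ∈ Finset.range m, y j‖ ≤ ε := by
  induction m with
  | zero => simpa using hε
  | succ m ih =>
    have hPy : ‖∏ j ∈ Finset.range m, y j‖ ≤ 1 := by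
      rw [norm_prod]
      exact Finset.prod_le_one (fun i _ => norm_nonneg _)
        (fun i hi => hy i (lt_of_lt_of_le (Finset.mem_range.mp hi) (Nat.le_succ m)))
    have key : ∏ j ∈ Finset.range (m + 1), x j - ∏ j ∈ Finset.range (m + 1), y j
        = x m * (∏ j ∈ Finset.range m, x j - ∏ j ∈ Finset.range m, y j)
          + (x m - y m) * ∏ j ∈ Finset.range m, y j := by
      rw [Finset.prod_range_succ, Finset.prod_range_succ]; ring
    rw [key]
    refine le_trans (Padic.nonarchimedean _ _) (max_le ?_ ?_)
    · rw [norm_mul]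
      calc ‖x m‖ * ‖∏ j ∈ Finset.range m, x j - ∏ j ∈ Finset.range m, y j‖
          ≤ 1 * ε := by
            refine mul_le_mul (hx m (Nat.lt_succ_self m))
              (ih (fun j hj => hx j (hj.trans (Nat.lt_succ_self m)))
                  (fun j hj => hy j (hj.trans (Nat.lt_succ_self m)))
                  (fun j hj => hxy j (hj.trans (Nat.lt_succ_self m))))
              (norm_nonneg _) zero_le_one
        _ = ε := one_mul ε
    · rw [norm_mul]
      calc ‖x m - y m‖ * ‖∏ j ∈ Finset.range m, y j‖
          ≤ ε * 1 := mul_le_mul (hxy m (Nat.lt_succ_self m)) hPy (norm_nonneg _) hε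
        _ = ε := mul_one ε

lemma padic_norm_nat_eq_one_of_lt {k : ℕ} (hk : 0 < k) (hkp : k < p) :
    ‖(k : ℚ_[p])‖ = 1 := by
  have h1 : ‖((k : ℤ) : ℚ_[p])‖ ≤ 1 := Padic.norm_int_le_one _
  have h2 : ¬ ((p : ℤ) ∣ (k : ℤ)) := by
    rw [Int.natCast_dvd_natCast]
    intro hdvd
    exact absurd (Nat.le_of_dvd hk hdvd) (not_le.mpr hkp)
  have h3 : ¬ ‖((k : ℤ) : ℚ_[p])‖ < 1 := by
    rw [Padic.norm_intCast_lt_one_iff]; exact h2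
  push_cast at h1 h3
  linarith [lt_or_eq_of_le h1, le_of_not_gt h3]

lemma padic_norm_factorial_eq_one {k : ℕ} (hkp : k < p) :
    ‖((k.factorial : ℕ) : ℚ_[p])‖ = 1 := by
  have h1 : ‖((k.factorial : ℤ) : ℚ_[p])‖ ≤ 1 := Padic.norm_int_le_one _
  have hfact : ¬ (p ∣ k.factorial) := by
    rw [(Fact.out : p.Prime).dvd_factorial]
    exact not_le.mpr hkp
  have h3 : ¬ ‖((k.factorial : ℤ) : ℚ_[p])‖ < 1 := by
    rw [Padic.norm_intCast_lt_one_iff, Int.natCast_dvd_natCast]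
    exact hfact
  push_cast at h1 h3
  linarith [lt_or_eq_of_le h1, le_of_not_gt h3]

/-- The key per-term estimate. -/
lemma padic_key_term (t : ℤ_[p]) (k : ℕ) (hk1 : 1 ≤ k) (hkp : k < p) :
    ‖padicChoose ((p : ℚ_[p]) * (t : ℚ_[p])) k *
        padicChoose (-1 - (p : ℚ_[p]) * (t : ℚ_[p])) k +
      (p : ℚ_[p]) * (t : ℚ_[p]) * (k : ℚ_[p])⁻¹‖ ≤ (p : ℝ) ^ (-2 : ℤ) := by
  set s : ℚ_[p] := (p : ℚ_[p]) * (t : ℚ_[p]) with hs_def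
  have hp1 : (1 : ℝ) < p := by exact_mod_cast (Fact.out : p.Prime).one_lt
  have hp0 : (0 : ℝ) < p := lt_trans zero_lt_one hp1
  have hpinv0 : (0 : ℝ) ≤ (p : ℝ)⁻¹ := inv_nonneg.mpr hp0.le
  have hpinv1 : (p : ℝ)⁻¹ ≤ 1 := by
    rw [inv_le_one_iff₀]; right; exact hp1.le
  have hs : ‖s‖ ≤ (p : ℝ)⁻¹ := by
    rw [hs_def, norm_mul, Padic.norm_p]
    calc (p : ℝ)⁻¹ * ‖(t : ℚ_[p])‖ ≤ (p : ℝ)⁻¹ * 1 :=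
          mul_le_mul_of_nonneg_left t.2 hpinv0
      _ = (p : ℝ)⁻¹ := mul_one _
  have hs1 : ‖s‖ ≤ 1 := hs.trans hpinv1
  -- notation
  set A : ℚ_[p] := ∏ j ∈ Finset.range (k - 1), (s - (j + 1 : ℕ)) with hA_def
  set c : ℚ_[p] := ∏ j ∈ Finset.range (k - 1), (-(j + 1 : ℕ) : ℚ_[p]) with hc_def
  set Q : ℚ_[p] := ∏ j ∈ Finset.range k, (-1 - s - (j : ℕ)) with hQ_def
  set d : ℚ_[p] := ∏ j ∈ Finset.range k, (-1 - (j : ℕ) : ℚ_[p]) with hd_def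
  -- P = A * s
  have hP : ∏ j ∈ Finset.range k, (s - (j : ℕ)) = A * s := by
    obtain ⟨m, rfl⟩ : ∃ m, k = m + 1 := ⟨k - 1, by omega⟩
    rw [Finset.prod_range_succ' (fun j => s - (j : ℕ))]
    simp [hA_def]
  -- norms of A, d
  have hnormA : ‖A‖ ≤ 1 := by
    rw [hA_def, norm_prod]
    refine Finset.prod_le_one (fun i _ => norm_nonneg _) (fun i hi => ?_)
    have : ‖s - ((i + 1 : ℕ) : ℚ_[p])‖ ≤ max ‖s‖ ‖(-((i + 1 : ℕ) : ℚ_[p]))‖ := by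
      rw [sub_eq_add_neg]; exact Padic.nonarchimedean _ _
    refine this.trans (max_le hs1 ?_)
    rw [norm_neg]
    exact_mod_cast Padic.norm_int_le_one ((i : ℤ) + 1)
  have hnormd : ‖d‖ ≤ 1 := by
    rw [hd_def, norm_prod]
    refine Finset.prod_le_one (fun i _ => norm_nonneg _) (fun i hi => ?_)
    have : (-1 - (i : ℕ) : ℚ_[p]) = ((-1 - (i : ℤ)) : ℤ) := by push_cast; ring
    rw [this]
    exact Padic.norm_int_le_one _
  -- A close to c
  have hAc : ‖A - c‖ ≤ (p : ℝ)⁻¹ := by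
    rw [hA_def, hc_def]
    refine padic_norm_prod_sub_prod_le _ _ _ hpinv0 (k - 1) ?_ ?_ ?_
    · intro j hj
      have : ‖s - ((j + 1 : ℕ) : ℚ_[p])‖ ≤ max ‖s‖ ‖(-((j + 1 : ℕ) : ℚ_[p]))‖ := by
        rw [sub_eq_add_neg]; exact Padic.nonarchimedean _ _
      refine this.trans (max_le hs1 ?_)
      rw [norm_neg]
      exact_mod_cast Padic.norm_int_le_one ((j : ℤ) + 1)
    · intro j hj
      rw [norm_neg]
      exact_mod_cast Padic.norm_int_le_one ((j : ℤ) + 1)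
    · intro j hj
      have : s - ((j + 1 : ℕ) : ℚ_[p]) - (-((j + 1 : ℕ) : ℚ_[p])) = s := by ring
      rw [this]; exact hs
  -- Q close to d
  have hQd : ‖Q - d‖ ≤ (p : ℝ)⁻¹ := by
    rw [hQ_def, hd_def]
    refine padic_norm_prod_sub_prod_le _ _ _ hpinv0 k ?_ ?_ ?_
    · intro j hj
      have h1 : ‖(-1 - (j : ℕ) : ℚ_[p])‖ ≤ 1 := by
        have : (-1 - (j : ℕ) : ℚ_[p]) = ((-1 - (j : ℤ)) : ℤ) := by push_cast; ring
        rw [this]; exact Padic.norm_int_le_one _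
      have : (-1 - s - (j : ℕ) : ℚ_[p]) = (-1 - (j : ℕ)) + (-s) := by ring
      rw [this]
      refine (Padic.nonarchimedean _ _).trans (max_le h1 ?_)
      rw [norm_neg]; exact hs1
    · intro j hj
      have : (-1 - (j : ℕ) : ℚ_[p]) = ((-1 - (j : ℤ)) : ℤ) := by push_cast; ring
      rw [this]; exact Padic.norm_int_le_one _
    · intro j hj
      have : (-1 - s - (j : ℕ)) - (-1 - (j : ℕ) : ℚ_[p]) = -s := by ring
      rw [this, norm_neg]; exact hs
  -- value of c * d
  have hcd : c * d = -(((k - 1).factorial : ℚ_[p]) * (k.factorial : ℚ_[p])) := by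
    have hc' : c = (-1) ^ (k - 1) * ((k - 1).factorial : ℚ_[p]) := by
      rw [hc_def]
      have : ∀ j ∈ Finset.range (k - 1), (-(j + 1 : ℕ) : ℚ_[p]) = (-1) * ((j + 1 : ℕ) : ℚ_[p]) := by
        intro j _; ring
      rw [Finset.prod_congr rfl this, Finset.prod_mul_distrib, Finset.prod_const,
        Finset.card_range]
      congr 1
      rw [← Nat.cast_prod]
      congr 1
      exact Finset.prod_range_add_one_eq_factorial (k - 1)
    have hd' : d = (-1) ^ k * (k.factorial : ℚ_[p]) := by
      rw [hd_def]
      have : ∀ j ∈ Finset.range k, (-1 - (j : ℕ) : ℚ_[p]) = (-1) * ((j + 1 : ℕ) : ℚ_[p]) := by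
        intro j _; push_cast; ring
      rw [Finset.prod_congr rfl this, Finset.prod_mul_distrib, Finset.prod_const,
        Finset.card_range]
      congr 1
      rw [← Nat.cast_prod]
      congr 1
      exact Finset.prod_range_add_one_eq_factorial k
    rw [hc', hd']
    have hpow : ((-1 : ℚ_[p]) ^ (k - 1)) * ((-1 : ℚ_[p]) ^ k) = -1 := by
      rw [← pow_add]
      have : k - 1 + k = 2 * (k - 1) + 1 := by omega
      rw [this, pow_succ, pow_mul]
      simp
    calc (-1 : ℚ_[p]) ^ (k - 1) * ((k - 1).factorial : ℚ_[p]) *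
          ((-1) ^ k * (k.factorial : ℚ_[p]))
        = ((-1 : ℚ_[p]) ^ (k - 1) * (-1) ^ k) *
            (((k - 1).factorial : ℚ_[p]) * (k.factorial : ℚ_[p])) := by ring
      _ = -(((k - 1).factorial : ℚ_[p]) * (k.factorial : ℚ_[p])) := by rw [hpow]; ring
  -- nonvanishing facts
  have hk0 : (k : ℚ_[p]) ≠ 0 := by
    have := padic_norm_nat_eq_one_of_lt (p := p) hk1 hkp
    intro h; rw [h] at this; simp at this
  have hfk : ((k.factorial : ℕ) : ℚ_[p]) ≠ 0 := by
    have := padic_norm_factorial_eq_one (p := p) hkp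
    intro h; rw [h] at this; simp at this
  have hfact_succ : (k.factorial : ℚ_[p]) = (k : ℚ_[p]) * ((k - 1).factorial : ℚ_[p]) := by
    have : k.factorial = k * (k - 1).factorial := by
      obtain ⟨m, rfl⟩ : ∃ m, k = m + 1 := ⟨k - 1, by omega⟩
      simp [Nat.factorial_succ]
    rw [this]; push_cast; ring
  -- main rewrite
  have hmain : padicChoose s k * padicChoose (-1 - s) k + s * (k : ℚ_[p])⁻¹
      = s * (A * (Q - d) + (A - c) * d) / ((k.factorial : ℚ_[p]) * (k.factorial : ℚ_[p])) := by
    rw [padicChoose, padicChoose, hP]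
    rw [← hQ_def]
    have expand : A * s / (k.factorial : ℚ_[p]) * (Q / (k.factorial : ℚ_[p]))
        = s * (A * Q) / ((k.factorial : ℚ_[p]) * (k.factorial : ℚ_[p])) := by
      field_simp
    rw [expand]
    rw [div_add' _ _ _ (by exact mul_ne_zero hfk hfk)]
    congr 1
    have : s * (k : ℚ_[p])⁻¹ * ((k.factorial : ℚ_[p]) * (k.factorial : ℚ_[p]))
        = -(s * (c * d)) := by
      rw [hcd, hfact_succ]
      field_simp
    rw [this]; ring
  rw [hmain]
  -- norm estimate
  have hden : ‖(k.factorial : ℚ_[p]) * (k.factorial : ℚ_[p])‖ = 1 := by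
    rw [norm_mul, padic_norm_factorial_eq_one hkp, mul_one]
  rw [norm_div, hden, div_one, norm_mul]
  have hinner : ‖A * (Q - d) + (A - c) * d‖ ≤ (p : ℝ)⁻¹ := by
    refine (Padic.nonarchimedean _ _).trans (max_le ?_ ?_)
    · rw [norm_mul]
      calc ‖A‖ * ‖Q - d‖ ≤ 1 * (p : ℝ)⁻¹ :=
            mul_le_mul hnormA hQd (norm_nonneg _) zero_le_one
        _ = (p : ℝ)⁻¹ := one_mul _
    · rw [norm_mul]
      calc ‖A - c‖ * ‖d‖ ≤ (p : ℝ)⁻¹ * 1 :=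
            mul_le_mul hAc hnormd (norm_nonneg _) hpinv0
        _ = (p : ℝ)⁻¹ := mul_one _
  calc ‖s‖ * ‖A * (Q - d) + (A - c) * d‖ ≤ (p : ℝ)⁻¹ * (p : ℝ)⁻¹ :=
        mul_le_mul hs hinner (norm_nonneg _) hpinv0
    _ = (p : ℝ) ^ (-2 : ℤ) := by
        rw [show (-2 : ℤ) = (-1) + (-1) by norm_num,
          zpow_add₀ (ne_of_gt hp0), zpow_neg_one]

end Aux

/-- For a prime `p > 3`, `n = (p-1)/2`, and a `p`-adic integer `t`:
`∑_{k=0}^{n} C(pt, k)·C(-1-pt, k) ≡ 1 - p·t·H_n (mod p²)` in `ℤ_p`, where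
`H_n` is the `n`-th harmonic number; i.e. the difference has `p`-adic norm at
most `p^{-2}`. -/
theorem sum_padicChoose_mul_congr (p : ℕ) [Fact p.Prime] (hp : 3 < p)
    (n : ℕ) (hn : n = (p - 1) / 2) (t : ℤ_[p]) :
    ‖∑ k ∈ Finset.range (n + 1),
        padicChoose ((p : ℚ_[p]) * (t : ℚ_[p])) k *
          padicChoose (-1 - (p : ℚ_[p]) * (t : ℚ_[p])) k -
      (1 - (p : ℚ_[p]) * (t : ℚ_[p]) * ((harmonic n : ℚ) : ℚ_[p]))‖
      ≤ (p : ℝ) ^ (-2 : ℤ) := by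
  set s : ℚ_[p] := (p : ℚ_[p]) * (t : ℚ_[p]) with hs_def
  set T : ℕ → ℚ_[p] := fun k => padicChoose s k * padicChoose (-1 - s) k with hT_def
  have hT0 : T 0 = 1 := by simp [hT_def, padicChoose]
  have hharm : ((harmonic n : ℚ) : ℚ_[p]) = ∑ i ∈ Finset.range n, ((i + 1 : ℕ) : ℚ_[p])⁻¹ := by
    rw [harmonic]
    push_cast
    rfl
  have hsplit : ∑ k ∈ Finset.range (n + 1), T k = 1 + ∑ i ∈ Finset.range n, T (i + 1) := by
    rw [Finset.sum_range_succ' T, hT0, add_comm]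
  have hrw : ∑ k ∈ Finset.range (n + 1), T k - (1 - s * ((harmonic n : ℚ) : ℚ_[p]))
      = ∑ i ∈ Finset.range n, (T (i + 1) + s * ((i + 1 : ℕ) : ℚ_[p])⁻¹) := by
    rw [hsplit, hharm, Finset.mul_sum, Finset.sum_add_distrib]
    ring
  rw [hrw]
  refine padic_norm_sum_le _ _ _ (by positivity) (fun i hi => ?_)
  have hk1 : 1 ≤ i + 1 := Nat.le_add_left 1 i
  have hkp : i + 1 < p := by
    have := Finset.mem_range.mp hi
    omega
  exact padic_key_term t (i + 1) hk1 hkp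
end

section
/- Let p > 3 be a prime. For every integer k with 1 ≤ k ≤ p-1, we have k · binom(2k,k) · binom(2(p-k), p-k) ≡ (-1)^{⌊2k/p⌋ - 1} · 2p (mod p²). -/
/-!
Let `k + j = p` with `p ≤ 2k` (the other case follows by swapping `k` and `j`, since
`k = p - j` and `p² ∣ p · C(2k,k) · C(2j,j)`). Then `p ∣ C(2k,k)` and, modulo `p`,
`C(2k,k)/p · (k!)² ≡ (p-1)! · (2k-p)! ≡ -(2k-p)!`, while `C(2j,j) · (j!)² = (2j)!`.
The factorials left over pair up as `a! · b!` with `a + b = p - 1`, and Wilson's theorem gives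
`a! · b! ≡ (-1)^(b+1)`; this turns `k · C(2k,k)/p · C(2j,j)` into `2` modulo `p`.
-/

open Nat

theorem Nat.cast_add_ascFactorial_of_charP {R : Type*} [Semiring R] (p : ℕ) [CharP R p]
    (a m : ℕ) : ((p + a).ascFactorial m : R) = a.ascFactorial m := by
  simp only [Nat.cast_ascFactorial, Nat.cast_add, CharP.cast_eq_zero, zero_add]

theorem Nat.Prime.dvd_centralBinom {p k : ℕ} (hp : p.Prime) (hk : k < p) (hpk : p ≤ 2 * k) :
    p ∣ centralBinom k :=
  hp.dvd_choose hk (by omega) hpk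

namespace ZMod

variable {p : ℕ} [Fact p.Prime]

theorem cast_factorial_mul_factorial {a b : ℕ} (h : a + b + 1 = p) :
    (a ! * b ! : ZMod p) = (-1) ^ (b + 1) := by
  have hfac := Nat.factorial_mul_descFactorial (show b ≤ p - 1 by omega)
  rw [show p - 1 - b = a by omega] at hfac
  have hcast := congrArg (Nat.cast : ℕ → ZMod p) hfac
  push_cast at hcast
  rw [cast_descFactorial (by omega), wilsons_lemma] at hcast
  have hsign : ((-1 : ZMod p) ^ b) * (-1) ^ b = 1 := pow_mul_pow_eq_one b (by norm_num)
  linear_combination (-1 : ZMod p) ^ b * hcast - (a ! * b ! : ZMod p) * hsign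

theorem cast_factorial_add_self_div_self (m : ℕ) :
    (((p + m)! / p : ℕ) : ZMod p) = -m ! := by
  have hp := (Fact.out : p.Prime)
  rw [← Nat.factorial_mul_ascFactorial, ← Nat.mul_factorial_pred hp.ne_zero, mul_assoc,
    Nat.mul_div_cancel_left _ hp.pos, Nat.cast_mul, wilsons_lemma,
    Nat.cast_add_ascFactorial_of_charP, Nat.one_ascFactorial, neg_one_mul]

theorem cast_centralBinom_div_self_mul_factorial_sq {k : ℕ} (hk : k < p) (hpk : p ≤ 2 * k) :
    ((centralBinom k / p : ℕ) : ZMod p) * (k ! : ZMod p) ^ 2 = -(2 * k - p)! := by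
  have hfac : centralBinom k * k ! ^ 2 = (p + (2 * k - p))! := by
    rw [show p + (2 * k - p) = k + k by omega, centralBinom_eq_two_mul_choose, two_mul, sq,
      ← mul_assoc, Nat.add_choose_mul_factorial_mul_factorial]
  rw [← Nat.cast_pow, ← Nat.cast_mul,
    Nat.div_mul_right_comm ((Fact.out : p.Prime).dvd_centralBinom hk hpk), hfac,
    cast_factorial_add_self_div_self]

theorem cast_mul_centralBinom_div_self_mul_centralBinom {k j : ℕ} (hkj : k + j = p) (hj : 0 < j)
    (hpk : p ≤ 2 * k) : (k * (centralBinom k / p : ℕ) * centralBinom j : ZMod p) = 2 := by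
  have hc := cast_centralBinom_div_self_mul_factorial_sq (p := p) (k := k) (by omega) hpk
  have hC : (centralBinom j * (j * (j - 1)!) ^ 2 : ZMod p) = 2 * j * (2 * j - 1)! := by
    have h := congrArg (Nat.cast : ℕ → ZMod p) (Nat.add_choose_mul_factorial_mul_factorial j j)
    rw [← two_mul, ← Nat.mul_factorial_pred (show 2 * j ≠ 0 by omega),
      ← Nat.mul_factorial_pred hj.ne'] at h
    rw [centralBinom_eq_two_mul_choose]
    push_cast at h ⊢
    linear_combination h
  have hkJ := cast_factorial_mul_factorial (p := p) (a := k) (b := j - 1) (by omega)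
  have hmB := cast_factorial_mul_factorial (p := p) (a := 2 * k - p) (b := 2 * j - 1) (by omega)
  rw [show 2 * j - 1 + 1 = 2 * j by omega, pow_mul, neg_one_sq, one_pow] at hmB
  rw [Nat.sub_add_cancel hj] at hkJ
  have hk : (k : ZMod p) = -j := by
    have h := congrArg (Nat.cast : ℕ → ZMod p) hkj
    push_cast [natCast_self] at h
    linear_combination h
  have hj0 : (j : ZMod p) ≠ 0 := by
    rw [Ne, natCast_eq_zero_iff]
    exact fun h => absurd (Nat.le_of_dvd hj h) (by omega)
  have hunit : ((k ! * (j - 1)! * j : ℕ) : ZMod p) ≠ 0 := by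
    push_cast
    refine mul_ne_zero ?_ hj0
    rw [hkJ]
    exact pow_ne_zero _ (neg_ne_zero.mpr one_ne_zero)
  have hsign : ((-1 : ZMod p) ^ j) * (-1) ^ j = 1 := pow_mul_pow_eq_one j (by norm_num)
  -- multiplying by `(k! · (j-1)! · j)²` turns every binomial into factorials
  refine mul_left_cancel₀ (pow_ne_zero 2 hunit) ?_
  push_cast
  linear_combination (k * centralBinom j * j ^ 2 * (j - 1)! ^ 2 : ZMod p) * hc
    - (k * (2 * k - p)! : ZMod p) * hC - 2 * k * j * hmB - 2 * j * hk
    - 2 * j ^ 2 * (k ! * (j - 1)! + (-1) ^ j) * hkJ - 2 * j ^ 2 * hsign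

end ZMod

namespace Nat

variable {p k j : ℕ}

theorem mul_centralBinom_mul_centralBinom_modEq (hp : p.Prime) (hkj : k + j = p) (hj : 0 < j)
    (hpk : p ≤ 2 * k) : (k * centralBinom k * centralBinom j : ℤ) ≡ 2 * p [ZMOD p ^ 2] := by
  have := Fact.mk hp
  obtain ⟨c, hc⟩ := hp.dvd_centralBinom (by omega) hpk
  have hmod : (k * c * centralBinom j : ℤ) ≡ 2 [ZMOD p] := by
    rw [← ZMod.intCast_eq_intCast_iff]
    have h := ZMod.cast_mul_centralBinom_div_self_mul_centralBinom hkj hj hpk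
    rw [hc, Nat.mul_div_cancel_left _ hp.pos] at h
    exact_mod_cast h
  rw [hc, sq]
  convert hmod.mul_left' (c := p) using 1 <;> push_cast <;> ring

theorem mul_centralBinom_mul_centralBinom_modEq_neg (hp : p.Prime) (hkj : k + j = p)
    (hj : 0 < j) (hpk : p ≤ 2 * k) :
    (j * centralBinom j * centralBinom k : ℤ) ≡ -(2 * p) [ZMOD p ^ 2] := by
  obtain ⟨c, hc⟩ := hp.dvd_centralBinom (by omega) hpk
  have hp2 : (p * centralBinom j * centralBinom k : ℤ) ≡ 0 [ZMOD p ^ 2] :=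
    Int.modEq_zero_iff_dvd.mpr ⟨centralBinom j * c, by rw [hc]; push_cast; ring⟩
  convert hp2.sub (mul_centralBinom_mul_centralBinom_modEq hp hkj hj hpk) using 1
  · rw [← hkj]; push_cast; ring
  · ring

end Nat

theorem k_mul_central_binomials_congr_general (p : ℕ) (hp : p.Prime)
    (k : ℕ) (hk1 : 1 ≤ k) (hk2 : k ≤ p - 1) :
    ((k : ℤ) * ((2 * k).choose k : ℤ) * ((2 * (p - k)).choose (p - k) : ℤ)) ≡
      (((-1 : ℤˣ) ^ (((2 * k / p : ℕ) : ℤ) - 1) : ℤˣ) : ℤ) * 2 * (p : ℤ)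
      [ZMOD ((p : ℤ) ^ 2)] := by
  have hp2 := hp.two_le
  simp only [← centralBinom_eq_two_mul_choose]
  rcases le_or_gt p (2 * k) with hpk | hkp
  · rw [Nat.div_eq_of_lt_le (k := 1) (by omega) (by omega)]
    simpa using mul_centralBinom_mul_centralBinom_modEq hp (j := p - k) (by omega) (by omega) hpk
  · rw [Nat.div_eq_of_lt hkp]
    simpa using
      mul_centralBinom_mul_centralBinom_modEq_neg hp (k := p - k) (by omega) hk1 (by omega)

/-- For a prime `p > 3` and `1 ≤ k ≤ p-1`:
`k·C(2k,k)·C(2(p-k), p-k) ≡ (-1)^{⌊2k/p⌋-1}·2p (mod p²)` as integers, where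
the sign `(-1)^{⌊2k/p⌋-1}` is computed in the unit group `ℤˣ` (with integer
exponent `⌊2k/p⌋ - 1`). -/
theorem k_mul_central_binomials_congr (p : ℕ) (hp : p.Prime) (hp3 : 3 < p)
    (k : ℕ) (hk1 : 1 ≤ k) (hk2 : k ≤ p - 1) :
    ((k : ℤ) * ((2 * k).choose k : ℤ) * ((2 * (p - k)).choose (p - k) : ℤ)) ≡
      (((-1 : ℤˣ) ^ (((2 * k / p : ℕ) : ℤ) - 1) : ℤˣ) : ℤ) * 2 * (p : ℤ)
      [ZMOD ((p : ℤ) ^ 2)] :=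
  k_mul_central_binomials_congr_general p hp k hk1 hk2
end
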